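/- Let P be a continuous probability kernel on the finite alphabet A with inf_{a∈A, x∈A^{-ℕ}} P(a|x) = δ > 0, and let X and Y be stationary chains compatible with P, with laws μ and ν respectively. Then the relative entropy rate lim_{n→∞} (1/(n+1)) Σ_{a ∈ A^{n+1}} μ[a] log( μ[a] / ν[a] ) exists and equals 0. -/

import Mathlib

open MeasureTheory ProbabilityTheory Filter ENNReal

namespace GT

/-- The set of pasts: `x i` represents the symbol `x_{-(i+1)}`. -/
abbrev Past (A : Type*) := ℕ → A

variable {A : Type*} [Fintype A] [MeasurableSpace A]

/-- The past of a bi-infinite trajectory: `past ω i = ω (-(i+1))`. -/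
def past (ω : ℤ → A) : Past A := fun i => ω (-((i : ℤ) + 1))

/-- The left shift on bi-infinite sequences. -/
def shift (ω : ℤ → A) : ℤ → A := fun n => ω (n + 1)

/-- Shift invariance (stationarity) of a measure on `A^ℤ`. -/
def ShiftInvariant (μ : Measure (ℤ → A)) : Prop := μ.map shift = μ

/-- `P` is a (measurable) probability kernel on the alphabet `A`. -/
def IsProbKernel (P : A → Past A → ℝ) : Prop :=
  (∀ a, Measurable (P a)) ∧ (∀ a x, 0 ≤ P a x) ∧ ∀ x, ∑ a, P a x = 1

/-- `μ` is compatible with the kernel `P`: `P` is a regular version of the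
conditional probabilities of `μ` given the past. -/
def Compatible (P : A → Past A → ℝ) (μ : Measure (ℤ → A)) : Prop :=
  ∀ (a : A) (B : Set (Past A)), MeasurableSet B →
    (μ {ω | ω 0 = a ∧ past ω ∈ B}).toReal = ∫ ω in past ⁻¹' B, P a (past ω) ∂μ

/-- A stationary chain compatible with `P`. -/
def StatChain (P : A → Past A → ℝ) (μ : Measure (ℤ → A)) : Prop :=
  IsProbabilityMeasure μ ∧ ShiftInvariant μ ∧ Compatible P μ

/-- The continuity rate (variation) of order `k` of the kernel `P`. -/
noncomputable def varRate (P : A → Past A → ℝ) (k : ℕ) : ℝ :=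
  sSup {d | ∃ (b : A) (x y : Past A), (∀ i < k, x i = y i) ∧ d = |P b x - P b y|}

/-- A kernel is continuous if its continuity rate tends to `0`. -/
def ContinuousKernel (P : A → Past A → ℝ) : Prop :=
  Tendsto (varRate P) atTop (nhds 0)

/-- Strong non-nullness of a kernel. -/
def StronglyNonNull (P : A → Past A → ℝ) : Prop := ∃ δ > 0, ∀ a x, δ ≤ P a x

/-- A regular kernel: continuous and strongly non-null. -/
def RegularKernel (P : A → Past A → ℝ) : Prop := ContinuousKernel P ∧ StronglyNonNull P

/-- Attractiveness: for every `a`, `x ↦ ∑_{b ≥ a} P(b|x)` is nondecreasing for the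
coordinatewise partial order on pasts. -/
def Attractive [LinearOrder A] (P : A → Past A → ℝ) : Prop :=
  ∀ a : A, Monotone fun x : Past A => ∑ b ∈ Finset.univ.filter (fun b => a ≤ b), P b x

/-- The word `(X_1, …, X_n)` read off from a trajectory `ω`. -/
def word (n : ℕ) (ω : ℤ → A) : Fin n → A := fun j => ω (((j : ℕ) : ℤ) + 1)

/-- `δ_j f`: the oscillation of `f` along the `j`-th coordinate. -/
noncomputable def deltaj {n : ℕ} (f : (Fin n → A) → ℝ) (j : Fin n) : ℝ :=
  sSup {d | ∃ a b : Fin n → A, (∀ i, i ≠ j → a i = b i) ∧ d = |f a - f b|}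

/-- `‖δf‖_{ℓ1}`. -/
noncomputable def delta1 {n : ℕ} (f : (Fin n → A) → ℝ) : ℝ := ∑ j, deltaj f j

/-- `‖δf‖_{ℓ2}²`. -/
noncomputable def delta2sq {n : ℕ} (f : (Fin n → A) → ℝ) : ℝ := ∑ j, (deltaj f j) ^ 2

/-- Concentration of measure at exponential rate for the stationary law `μ`. -/
def ConcExpRate (μ : Measure (ℤ → A)) : Prop :=
  ∃ (C : ℝ) (g : ℝ → ℝ → ℝ), (∀ ε t, 0 < ε → 0 < t → 0 < g ε t) ∧
    ∀ (n : ℕ), 1 ≤ n → ∀ (f : (Fin n → A) → ℝ) (ε : ℝ), 0 < ε →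
      (μ {ω | ε < |f (word n ω) - ∫ ω', f (word n ω') ∂μ|}).toReal ≤
        C * Real.exp (-(g ε (delta1 f)) / delta2sq f)

/-- `ℙ` is the law of an i.i.d. process indexed by `ℤ`. -/
def IsIID {U : Type*} [MeasurableSpace U] (P : Measure (ℤ → U)) : Prop :=
  IsProbabilityMeasure P ∧
  iIndepFun (fun i (u : ℤ → U) => u i) P ∧
  ∀ i : ℤ, P.map (fun u => u i) = P.map (fun u => u 0)

/-- A finitary coding of the process with law `ℙ` onto the process with law `μ`:
a shift-equivariant measurable factor map together with a.s. finite stopping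
times `θ₁` (into the past) and `θ₂` (into the future) such that the zeroth output
symbol only depends on the coordinates in the window `[-θ₁, θ₂]`. -/
structure FinitaryCoding {U : Type*} [MeasurableSpace U]
    (μ : Measure (ℤ → A)) (P : Measure (ℤ → U)) where
  Φ : (ℤ → U) → ℤ → A
  meas : Measurable Φ
  equivariant : ∀ (u : ℤ → U) (n : ℤ), Φ (fun m => u (m + 1)) n = Φ u (n + 1)
  map_eq : P.map Φ = μ
  θ₁ : (ℤ → U) → ℕ∞
  θ₂ : (ℤ → U) → ℕ∞
  meas_theta : ∀ k l : ℕ∞, MeasurableSet {u | θ₁ u = k ∧ θ₂ u = l}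
  finite_ae : P {u | θ₁ u = ⊤ ∨ θ₂ u = ⊤} = 0
  window : ∀ (k l : ℕ) (u v : ℤ → U),
      (∀ j : ℤ, -(k : ℤ) ≤ j → j ≤ (l : ℤ) → u j = v j) →
      θ₁ u = (k : ℕ∞) → θ₂ u = (l : ℕ∞) → θ₁ v = (k : ℕ∞) ∧ θ₂ v = (l : ℕ∞)
  localize : ∀ u v : ℤ → U,
      (∀ j : ℤ, ((j.natAbs : ℕ∞) ≤ if j < 0 then θ₁ u else θ₂ u) → u j = v j) →
      Φ u 0 = Φ v 0

/-- The new past obtained by appending the freshly generated symbol `a`. -/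
def consPast (a : A) (x : Past A) : Past A := fun i =>
  match i with
  | 0 => a
  | j + 1 => x j

/-- The probability that the fixed-past chain with past `x` produces the word `w`
(first element of `w` generated first). -/
noncomputable def wordProb (P : A → Past A → ℝ) : Past A → List A → ℝ
  | _, [] => 1
  | x, a :: w => P a x * wordProb P (consPast a x) w

/-- `ℙ(X_{j+1}^x … X_{j+|w|}^x = w)`: the law of the fixed-past chain shifted by `j`. -/
noncomputable def shiftedCylProb (P : A → Past A → ℝ) (x : Past A) (j : ℕ) (w : List A) : ℝ :=
  ∑ u : Fin j → A, wordProb P x (List.ofFn u ++ w)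

/-- The cylinder set `{ω : ω_1 … ω_n = w}` (coordinates `1, …, |w|`). -/
def cylFrom1 (w : List A) : Set (ℤ → A) :=
  {ω | ∀ i : Fin w.length, ω (((i : ℕ) : ℤ) + 1) = w.get i}


variable {A : Type*} [Fintype A] [MeasurableSpace A]

/-- The cylinder set `{ω : ω_0 … ω_{n-1} = w}`. -/
def cyl (n : ℕ) (w : Fin n → A) : Set (ℤ → A) := {ω | ∀ i : Fin n, ω ((i : ℕ) : ℤ) = w i}

/-!
Both chains obey the same chain rule: extending a cylinder by one symbol into the past multiplies
its probability by `P(a | past)`, and on the cylinder this is known up to `var_n`. Playing the upper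
bound `(q + var_n)` for `μ` against the lower bound `max δ (q - var_n)` for `ν` gives
`μ[w] ≤ ∏_{k<n} (1 + 2 var_k / δ) ν[w]` and symmetrically, so every log-ratio `log (μ[w] / ν[w])`
is at most `∑_{k<n} log (1 + 2 var_k / δ)` in absolute value. These are Cesàro sums of a sequence
tending to `0`.
-/

open Topology

lemma measure_add_le_measure_union_of_sum_eq {Ω ι : Type*} [MeasurableSpace Ω] [Fintype ι]
    {μ : Measure Ω} [IsFiniteMeasure μ] {s : ι → Set Ω} (hcover : ⋃ k, s k = Set.univ)
    (hsum : ∑ k, μ (s k) = μ Set.univ) {i j : ι} (hij : i ≠ j) :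
    μ (s i) + μ (s j) ≤ μ (s i ∪ s j) := by
  classical
  set rest := (Finset.univ.erase i).erase j
  have hj : j ∈ Finset.univ.erase i := Finset.mem_erase.2 ⟨hij.symm, Finset.mem_univ j⟩
  have hsplit : ∑ k, μ (s k) = μ (s i) + μ (s j) + ∑ k ∈ rest, μ (s k) := by
    rw [← Finset.add_sum_erase _ _ (Finset.mem_univ i), ← Finset.add_sum_erase _ _ hj, add_assoc]
  have hcover' : Set.univ ⊆ (s i ∪ s j) ∪ ⋃ k ∈ rest, s k := by
    intro ω _
    obtain ⟨k, hk⟩ := Set.mem_iUnion.1 (hcover.superset (Set.mem_univ ω))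
    by_cases hki : k = i
    · exact Or.inl (Or.inl (hki ▸ hk))
    by_cases hkj : k = j
    · exact Or.inl (Or.inr (hkj ▸ hk))
    exact Or.inr (Set.mem_biUnion (by simp [rest, hki, hkj]) hk)
  have hle : μ Set.univ ≤ μ (s i ∪ s j) + ∑ k ∈ rest, μ (s k) :=
    calc μ Set.univ ≤ μ ((s i ∪ s j) ∪ ⋃ k ∈ rest, s k) := measure_mono hcover'
      _ ≤ μ (s i ∪ s j) + μ (⋃ k ∈ rest, s k) := measure_union_le _ _
      _ ≤ μ (s i ∪ s j) + ∑ k ∈ rest, μ (s k) := by gcongr; exact measure_biUnion_finset_le _ _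
  rw [← hsum, hsplit] at hle
  exact (ENNReal.add_le_add_iff_right (ENNReal.sum_ne_top.2 fun k _ => measure_ne_top μ _)).1 hle

/-- The source of the factor `1 + 2r/δ`: `(q + r) y` bounds one chain from above and
`max δ (q - r) * y` the other from below. -/
lemma add_mul_le_of_sub_mul_le {δ q r y y' : ℝ} (hδ : 0 < δ) (hr : 0 ≤ r)
    (hsub : (q - r) * y ≤ y') (hδy : δ * y ≤ y') : (q + r) * y ≤ (1 + 2 * r / δ) * y' := by
  have : 2 * r * y ≤ 2 * r / δ * y' := by
    rw [div_mul_eq_mul_div, le_div_iff₀ hδ]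
    nlinarith
  nlinarith

lemma abs_sum_mul_log_div_le {ι : Type*} [Fintype ι] {x y : ι → ℝ} {C : ℝ}
    (hx : ∀ i, 0 < x i) (hy : ∀ i, 0 < y i) (hxy : ∀ i, x i ≤ C * y i)
    (hyx : ∀ i, y i ≤ C * x i) :
    |∑ i, x i * Real.log (x i / y i)| ≤ (∑ i, x i) * Real.log C := by
  rw [Finset.sum_mul]
  refine (Finset.abs_sum_le_sum_abs _ _).trans (Finset.sum_le_sum fun i _ => ?_)
  have hC : 0 < C := pos_of_mul_pos_left ((hx i).trans_le (hxy i)) (hy i).le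
  have hlogx := Real.log_le_log (hx i) (hxy i)
  have hlogy := Real.log_le_log (hy i) (hyx i)
  rw [Real.log_mul hC.ne' (hy i).ne'] at hlogx
  rw [Real.log_mul hC.ne' (hx i).ne'] at hlogy
  rw [abs_mul, abs_of_pos (hx i), Real.log_div (hx i).ne' (hy i).ne']
  exact mul_le_mul_of_nonneg_left (abs_le.2 ⟨by linarith, by linarith⟩) (hx i).le

lemma tendsto_average_range_succ {u : ℕ → ℝ} {l : ℝ} (h : Tendsto u atTop (𝓝 l)) :
    Tendsto (fun n : ℕ => 1 / ((n : ℝ) + 1) * ∑ k ∈ Finset.range (n + 1), u k) atTop (𝓝 l) := by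
  refine (h.cesaro.comp (tendsto_add_atTop_nat 1)).congr fun n => ?_
  simp [one_div]

omit [Fintype A] in
lemma measurable_past : Measurable (past : (ℤ → A) → Past A) :=
  measurable_pi_lambda _ fun _ => measurable_pi_apply _

omit [Fintype A] in
lemma measurable_shift : Measurable (shift : (ℤ → A) → ℤ → A) :=
  measurable_pi_lambda _ fun _ => measurable_pi_apply _

omit [Fintype A] [MeasurableSpace A] in
lemma past_shift (ω : ℤ → A) : past (shift ω) = consPast (ω 0) (past ω) := by
  funext i
  cases i <;> simp [past, shift, consPast]

omit [Fintype A] [MeasurableSpace A] in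
lemma iterate_shift_apply (m : ℕ) (ω : ℤ → A) (k : ℤ) : shift^[m] ω k = ω (k + m) := by
  induction m generalizing ω with
  | zero => simp
  | succ m ih => rw [Function.iterate_succ_apply, ih]; simp only [shift]; push_cast; ring_nf

omit [Fintype A] in
lemma ShiftInvariant.measurePreserving {μ : Measure (ℤ → A)} (hinv : ShiftInvariant μ) :
    MeasurePreserving shift μ μ :=
  ⟨measurable_shift, hinv⟩

omit [Fintype A] [MeasurableSpace A] in
lemma varRate_nonneg (P : A → Past A → ℝ) (k : ℕ) : 0 ≤ varRate P k :=
  Real.sSup_nonneg fun _ ⟨_, _, _, _, hd⟩ => hd ▸ abs_nonneg _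

section Kernel

variable {P : A → Past A → ℝ}

lemma IsProbKernel.le_one (hker : IsProbKernel P) (a : A) (x : Past A) : P a x ≤ 1 :=
  hker.2.2 x ▸ Finset.single_le_sum (fun b _ => hker.2.1 b x) (Finset.mem_univ a)

lemma IsProbKernel.abs_sub_le_varRate (hker : IsProbKernel P) {k : ℕ} (b : A) {x y : Past A}
    (h : ∀ i < k, x i = y i) : |P b x - P b y| ≤ varRate P k := by
  refine le_csSup ⟨1, ?_⟩ ⟨b, x, y, h, rfl⟩
  rintro _ ⟨c, x', y', -, rfl⟩
  exact abs_sub_le_of_nonneg_of_le (hker.2.1 c x') (hker.le_one c x') (hker.2.1 c y')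
    (hker.le_one c y')

lemma IsProbKernel.integrable_comp_past (hker : IsProbKernel P) (μ : Measure (ℤ → A))
    [IsFiniteMeasure μ] (a : A) : Integrable (fun ω => P a (past ω)) μ :=
  .of_bound ((hker.1 a).comp measurable_past).aestronglyMeasurable 1 <| ae_of_all _ fun ω => by
    rw [Real.norm_eq_abs, abs_of_nonneg (hker.2.1 _ _)]
    exact hker.le_one _ _

end Kernel

section Compatible

variable {P : A → Past A → ℝ} {μ : Measure (ℤ → A)}

omit [Fintype A] in
lemma Compatible.measureReal_eq_integral (hcomp : Compatible P μ) (a : A) :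
    μ.real {ω | ω 0 = a} = ∫ ω, P a (past ω) ∂μ := by
  simpa [measureReal_def] using hcomp a Set.univ MeasurableSet.univ

lemma Compatible.le_measureReal (hker : IsProbKernel P) {δ : ℝ} (hbound : ∀ a x, δ ≤ P a x)
    [IsProbabilityMeasure μ] (hcomp : Compatible P μ) (a : A) : δ ≤ μ.real {ω | ω 0 = a} := by
  rw [hcomp.measureReal_eq_integral]
  simpa using integral_mono (integrable_const δ) (hker.integrable_comp_past μ a)
    fun ω => hbound a (past ω)

lemma Compatible.sum_measure (hker : IsProbKernel P) [IsProbabilityMeasure μ]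
    (hcomp : Compatible P μ) : ∑ a, μ {ω | ω 0 = a} = 1 := by
  have hreal : ∑ a, μ.real {ω | ω 0 = a} = 1 := by
    simp_rw [hcomp.measureReal_eq_integral]
    rw [← integral_finsetSum _ fun a _ => hker.integrable_comp_past μ a]
    simp [hker.2.2]
  rwa [← ENNReal.toReal_eq_one_iff, ENNReal.toReal_sum fun a _ => measure_ne_top μ _]

/-- The σ-algebra of `A` is arbitrary; a strongly non-null kernel forces it to be discrete, since
two inseparable symbols `a ≠ b` would make `{ω 0 = b}` a null set for the outer measure. -/
lemma Compatible.measurableSingletonClass (hker : IsProbKernel P) {δ : ℝ} (hδ : 0 < δ)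
    (hbound : ∀ a x, δ ≤ P a x) [IsProbabilityMeasure μ] (hcomp : Compatible P μ) :
    MeasurableSingletonClass A := by
  suffices MeasurableSpace.SeparatesPoints A from inferInstance
  refine ⟨fun a b hab => by_contra fun hne => ?_⟩
  set S : A → Set (ℤ → A) := fun c => {ω | ω 0 = c}
  have hhull : S b ⊆ toMeasurable μ (S a) := by
    intro ω (hω : ω 0 = b)
    have hupdate : Function.update ω 0 a ∈ toMeasurable μ (S a) :=
      subset_toMeasurable μ _ (by simp [S])
    have := hab _ ((measurableSet_toMeasurable μ (S a)).preimage (measurable_update ω)) hupdate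
    rwa [Set.mem_preimage, ← hω, Function.update_eq_self] at this
  have hcover : ⋃ c, S c = Set.univ :=
    Set.eq_univ_of_forall fun ω => Set.mem_iUnion.2 ⟨ω 0, rfl⟩
  have hadd := measure_add_le_measure_union_of_sum_eq hcover
    ((hcomp.sum_measure hker).trans measure_univ.symm) hne
  have hnull : μ (S b) = 0 := by
    refine le_antisymm ((ENNReal.add_le_add_iff_left (measure_ne_top μ (S a))).1 ?_) zero_le
    calc μ (S a) + μ (S b) ≤ μ (S a ∪ S b) := hadd
      _ ≤ μ (toMeasurable μ (S a)) :=
        measure_mono (Set.union_subset (subset_toMeasurable μ _) hhull)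
      _ = μ (S a) + 0 := by rw [measure_toMeasurable, add_zero]
  have := hcomp.le_measureReal hker hbound b
  rw [measureReal_def, hnull, ENNReal.toReal_zero] at this
  linarith

end Compatible

/-- Pasts whose `n` most recent symbols are `w 0, …, w (n - 1)`, most recent first. -/
def pastCyl (n : ℕ) (w : Fin n → A) : Set (Past A) := {x | ∀ i : Fin n, x i = w i}

omit [Fintype A] [MeasurableSpace A] in
lemma pastCyl_zero (w : Fin 0 → A) : pastCyl 0 w = Set.univ :=
  Set.eq_univ_of_forall fun _ i => i.elim0

omit [Fintype A] [MeasurableSpace A] in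
lemma consPast_mem_pastCyl_succ {n : ℕ} {a b : A} {x : Past A} {w : Fin n → A} :
    consPast b x ∈ pastCyl (n + 1) (Fin.cons a w) ↔ b = a ∧ x ∈ pastCyl n w := by
  simp [pastCyl, Fin.forall_fin_succ, consPast]

omit [Fintype A] [MeasurableSpace A] in
lemma pastCyl_nonempty {n : ℕ} (w : Fin n → A) (a : A) : (pastCyl n w).Nonempty :=
  ⟨fun i => if h : i < n then w ⟨i, h⟩ else a, fun i => dif_pos i.2⟩

section Cylinders

variable [MeasurableSingletonClass A] {P : A → Past A → ℝ} {μ ν : Measure (ℤ → A)}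

omit [Fintype A] in
lemma measurableSet_pastCyl (n : ℕ) (w : Fin n → A) : MeasurableSet (pastCyl n w) := by
  have : pastCyl n w = ⋂ i : Fin n, (fun x : Past A => x i) ⁻¹' {w i} := by
    ext
    simp [pastCyl]
  rw [this]
  exact .iInter fun i => measurable_pi_apply _ (measurableSet_singleton _)

omit [Fintype A] in
lemma ShiftInvariant.measureReal_cyl (hinv : ShiftInvariant μ) (n : ℕ) (w : Fin n → A) :
    μ.real (cyl n w) = μ.real (past ⁻¹' pastCyl n (w ∘ Fin.rev)) := by
  have hset : cyl n w = shift^[n] ⁻¹' (past ⁻¹' pastCyl n (w ∘ Fin.rev)) := by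
    ext ω
    simp only [cyl, pastCyl, Set.mem_preimage, Set.mem_ofPred_eq, past, iterate_shift_apply,
      Function.comp_apply]
    refine (Fin.revPerm.forall_congr fun {i} => ?_).symm
    rw [Fin.revPerm_apply, Fin.val_rev]
    have := i.isLt
    congr! 2
    omega
  rw [hset, (hinv.measurePreserving.iterate n).measureReal_preimage
    (measurable_past (measurableSet_pastCyl n _)).nullMeasurableSet]

lemma sum_measureReal_cyl_eq (hμi : ShiftInvariant μ) (hνi : ShiftInvariant ν)
    (f : ℝ → ℝ → ℝ) (n : ℕ) :
    ∑ w : Fin n → A, f (μ.real (cyl n w)) (ν.real (cyl n w)) =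
      ∑ w : Fin n → A, f (μ.real (past ⁻¹' pastCyl n w)) (ν.real (past ⁻¹' pastCyl n w)) := by
  simp only [hμi.measureReal_cyl, hνi.measureReal_cyl]
  exact Fintype.sum_bijective (· ∘ Fin.rev)
    (Function.Involutive.bijective fun w => by simp [Function.comp_def]) _ _ fun _ => rfl

omit [Fintype A] in
lemma measureReal_pastCyl_succ (hinv : ShiftInvariant μ) (hcomp : Compatible P μ) {n : ℕ}
    (a : A) (w : Fin n → A) :
    μ.real (past ⁻¹' pastCyl (n + 1) (Fin.cons a w)) =
      ∫ ω in past ⁻¹' pastCyl n w, P a (past ω) ∂μ := by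
  rw [← hcomp a _ (measurableSet_pastCyl n w), ← hinv.measurePreserving.measureReal_preimage
    (measurable_past (measurableSet_pastCyl _ _)).nullMeasurableSet]
  congr 1
  ext ω
  simp [past_shift, consPast_mem_pastCyl_succ]

lemma sum_measureReal_pastCyl_succ (hker : IsProbKernel P) [IsFiniteMeasure μ]
    (hinv : ShiftInvariant μ) (hcomp : Compatible P μ) {n : ℕ} (w : Fin n → A) :
    ∑ a, μ.real (past ⁻¹' pastCyl (n + 1) (Fin.cons a w)) = μ.real (past ⁻¹' pastCyl n w) := by
  simp_rw [measureReal_pastCyl_succ hinv hcomp]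
  rw [← integral_finsetSum _ fun a _ => (hker.integrable_comp_past μ a).integrableOn]
  simp [hker.2.2]

lemma sum_measureReal_pastCyl (hker : IsProbKernel P) [IsProbabilityMeasure μ]
    (hinv : ShiftInvariant μ) (hcomp : Compatible P μ) (n : ℕ) :
    ∑ w : Fin n → A, μ.real (past ⁻¹' pastCyl n w) = 1 := by
  induction n with
  | zero => simp [pastCyl_zero]
  | succ n ih =>
    rw [← Fintype.sum_equiv (Fin.consEquiv fun _ => A)
      (fun p => μ.real (past ⁻¹' pastCyl (n + 1) (Fin.cons p.1 p.2))) _ fun _ => rfl,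
      Fintype.sum_prod_type, Finset.sum_comm]
    simpa only [sum_measureReal_pastCyl_succ hker hinv hcomp] using ih

lemma abs_measureReal_pastCyl_succ_sub_le (hker : IsProbKernel P) [IsFiniteMeasure μ]
    (hinv : ShiftInvariant μ) (hcomp : Compatible P μ) {n : ℕ} {w : Fin n → A} {x : Past A}
    (hx : x ∈ pastCyl n w) (a : A) :
    |μ.real (past ⁻¹' pastCyl (n + 1) (Fin.cons a w)) - P a x * μ.real (past ⁻¹' pastCyl n w)|
      ≤ varRate P n * μ.real (past ⁻¹' pastCyl n w) := by
  have hconst :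
      P a x * μ.real (past ⁻¹' pastCyl n w) = ∫ _ in past ⁻¹' pastCyl n w, P a x ∂μ := by
    rw [setIntegral_const, smul_eq_mul, mul_comm]
  rw [measureReal_pastCyl_succ hinv hcomp, hconst,
    ← integral_sub (hker.integrable_comp_past μ a).integrableOn (integrable_const (P a x)),
    ← Real.norm_eq_abs]
  refine norm_setIntegral_le_of_norm_le_const (measure_lt_top μ _) fun ω hω => ?_
  exact hker.abs_sub_le_varRate a fun i hi => (hω ⟨i, hi⟩).trans (hx ⟨i, hi⟩).symm

lemma mul_measureReal_pastCyl_le (hker : IsProbKernel P) {δ : ℝ} (hbound : ∀ a x, δ ≤ P a x)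
    [IsFiniteMeasure μ] (hinv : ShiftInvariant μ) (hcomp : Compatible P μ) {n : ℕ} (a : A)
    (w : Fin n → A) :
    δ * μ.real (past ⁻¹' pastCyl n w) ≤ μ.real (past ⁻¹' pastCyl (n + 1) (Fin.cons a w)) := by
  rw [measureReal_pastCyl_succ hinv hcomp]
  exact setIntegral_ge_of_const_le_real (measurable_past (measurableSet_pastCyl n w))
    (measure_ne_top μ _) (fun ω _ => hbound a (past ω))
    (hker.integrable_comp_past μ a).integrableOn

lemma pow_le_measureReal_pastCyl (hker : IsProbKernel P) {δ : ℝ} (hδ : 0 < δ)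
    (hbound : ∀ a x, δ ≤ P a x) [IsProbabilityMeasure μ] (hinv : ShiftInvariant μ)
    (hcomp : Compatible P μ) (n : ℕ) (w : Fin n → A) :
    δ ^ n ≤ μ.real (past ⁻¹' pastCyl n w) := by
  induction n with
  | zero => simp [pastCyl_zero]
  | succ n ih =>
    rw [← Fin.cons_self_tail w, pow_succ']
    exact (mul_le_mul_of_nonneg_left (ih _) hδ.le).trans
      (mul_measureReal_pastCyl_le hker hbound hinv hcomp _ _)

lemma measureReal_pastCyl_le_prod_mul (hker : IsProbKernel P) {δ : ℝ} (hδ : 0 < δ)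
    (hbound : ∀ a x, δ ≤ P a x) [IsProbabilityMeasure μ] [IsProbabilityMeasure ν]
    (hμi : ShiftInvariant μ) (hμc : Compatible P μ) (hνi : ShiftInvariant ν)
    (hνc : Compatible P ν) (n : ℕ) (w : Fin n → A) :
    μ.real (past ⁻¹' pastCyl n w) ≤
      (∏ k ∈ Finset.range n, (1 + 2 * varRate P k / δ)) * ν.real (past ⁻¹' pastCyl n w) := by
  induction n with
  | zero => simp [pastCyl_zero]
  | succ n ih =>
    obtain ⟨a, v, rfl⟩ : ∃ a v, w = Fin.cons a v :=
      ⟨w 0, Fin.tail w, (Fin.cons_self_tail w).symm⟩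
    obtain ⟨x, hx⟩ := pastCyl_nonempty v a
    have hμ := (abs_le.1 (abs_measureReal_pastCyl_succ_sub_le hker hμi hμc hx a)).2
    have hν := (abs_le.1 (abs_measureReal_pastCyl_succ_sub_le hker hνi hνc hx a)).1
    have hstep := add_mul_le_of_sub_mul_le (q := P a x) hδ (varRate_nonneg P n) (by linarith)
      (mul_measureReal_pastCyl_le hker hbound hνi hνc a v)
    have hprod : 0 ≤ ∏ k ∈ Finset.range n, (1 + 2 * varRate P k / δ) :=
      Finset.prod_nonneg fun k _ => by have := varRate_nonneg P k; positivity
    have hqr : 0 ≤ P a x + varRate P n := add_nonneg (hker.2.1 a x) (varRate_nonneg P n)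
    rw [Finset.prod_range_succ]
    calc _ ≤ (P a x + varRate P n) * μ.real (past ⁻¹' pastCyl n v) := by linarith
      _ ≤ (P a x + varRate P n) * ((∏ k ∈ Finset.range n, (1 + 2 * varRate P k / δ)) *
            ν.real (past ⁻¹' pastCyl n v)) := mul_le_mul_of_nonneg_left (ih v) hqr
      _ ≤ _ := by nlinarith

lemma abs_sum_measureReal_pastCyl_mul_log_le (hker : IsProbKernel P) {δ : ℝ} (hδ : 0 < δ)
    (hbound : ∀ a x, δ ≤ P a x) [IsProbabilityMeasure μ] [IsProbabilityMeasure ν]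
    (hμi : ShiftInvariant μ) (hμc : Compatible P μ) (hνi : ShiftInvariant ν)
    (hνc : Compatible P ν) (n : ℕ) :
    |∑ w : Fin n → A, μ.real (past ⁻¹' pastCyl n w) *
        Real.log (μ.real (past ⁻¹' pastCyl n w) / ν.real (past ⁻¹' pastCyl n w))| ≤
      ∑ k ∈ Finset.range n, Real.log (1 + 2 * varRate P k / δ) := by
  have hentropy := abs_sum_mul_log_div_le
    (fun w => (pow_pos hδ n).trans_le (pow_le_measureReal_pastCyl hker hδ hbound hμi hμc n w))
    (fun w => (pow_pos hδ n).trans_le (pow_le_measureReal_pastCyl hker hδ hbound hνi hνc n w))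
    (measureReal_pastCyl_le_prod_mul hker hδ hbound hμi hμc hνi hνc n)
    (measureReal_pastCyl_le_prod_mul hker hδ hbound hνi hνc hμi hμc n)
  rwa [sum_measureReal_pastCyl hker hμi hμc, one_mul,
    Real.log_prod fun k _ => by have := varRate_nonneg P k; positivity] at hentropy

end Cylinders

/-- **Lemma 4** (Gallo–Takahashi): two stationary chains compatible with the same
continuous, strongly non-null kernel have relative entropy rate zero. -/
theorem statement9 (P : A → Past A → ℝ) (hker : IsProbKernel P)
    (hcont : ContinuousKernel P) (δ : ℝ) (hδ : 0 < δ) (hbound : ∀ a x, δ ≤ P a x)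
    (μ ν : Measure (ℤ → A)) (hμ : StatChain P μ) (hν : StatChain P ν) :
    Tendsto (fun n : ℕ =>
        (1 / ((n : ℝ) + 1)) * ∑ w : Fin (n + 1) → A,
          (μ (cyl (n + 1) w)).toReal *
            Real.log ((μ (cyl (n + 1) w)).toReal / (ν (cyl (n + 1) w)).toReal))
      atTop (nhds 0) := by
  obtain ⟨hμp, hμi, hμc⟩ := hμ
  obtain ⟨hνp, hνi, hνc⟩ := hν
  have := hμc.measurableSingletonClass hker hδ hbound
  have hlog : Tendsto (fun k => Real.log (1 + 2 * varRate P k / δ)) atTop (𝓝 0) := by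
    simpa using (((hcont.const_mul 2).div_const δ).const_add 1).log (by simp)
  refine squeeze_zero_norm (fun n => ?_) (tendsto_average_range_succ hlog)
  simp only [← measureReal_def]
  rw [sum_measureReal_cyl_eq hμi hνi (fun s t => s * Real.log (s / t)), norm_mul,
    Real.norm_of_nonneg (by positivity), Real.norm_eq_abs]
  exact mul_le_mul_of_nonneg_left
    (abs_sum_measureReal_pastCyl_mul_log_le hker hδ hbound hμi hμc hνi hνc (n + 1))
    (by positivity)

end GT
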